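/- Let p be an odd prime and i ≥ 2 an integer. If n is a positive integer with φ(n) = φ(p^i) = (p−1)p^{i−1} and n ∉ {p^i, 2p^i}, then q(n) < q(p^i), where q(k) = k/rad(k). Consequently the gap of n is strictly smaller than the gap of p^i. -/

import Mathlib

/-- The radical of a natural number: the product of its distinct prime factors. -/
def rad (n : ℕ) : ℕ := n.primeFactors.prod id

lemma rad_dvd (n : ℕ) : rad n ∣ n := by
  simpa [rad] using Nat.prod_primeFactors_dvd n

lemma rad_pos (n : ℕ) : 0 < rad n := by
  unfold rad
  exact Finset.prod_pos fun q hq => (Nat.prime_of_mem_primeFactors hq).pos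

lemma totient_formula (n : ℕ) (hn : n ≠ 0) :
    n.totient = (n / rad n) * ∏ q ∈ n.primeFactors, (q - 1) := by
  have hdiv : n = (n.factorization.prod fun q k => q ^ (k - 1)) * rad n := by
    rw [rad]
    conv_lhs => rw [← Nat.factorization_prod_pow_eq_self hn]
    rw [Finsupp.prod, Finsupp.prod, Nat.support_factorization, ← Finset.prod_mul_distrib]
    refine Finset.prod_congr rfl fun q hq => ?_
    have hk : n.factorization q ≠ 0 := by
      rw [← Finsupp.mem_support_iff, Nat.support_factorization]; exact hq
    simp only [id]
    rw [← pow_succ]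
    congr 1
    omega
  rw [Nat.totient_eq_prod_factorization hn, Finsupp.prod_mul,
    (Nat.div_eq_of_eq_mul_left (rad_pos n) hdiv : n / rad n = _)]
  simp only [Finsupp.prod, Nat.support_factorization]

lemma not_dvd_totient (p m : ℕ) (hp : p.Prime) (hm : m ≠ 0) (h1 : ¬ p ∣ m)
    (h2 : ∀ q ∈ m.primeFactors, ¬ p ∣ q - 1) : ¬ p ∣ m.totient := by
  intro hdvd
  rw [totient_formula m hm] at hdvd
  rcases (Nat.Prime.dvd_mul hp).mp hdvd with h | h
  · exact h1 (h.trans ⟨rad m, (Nat.div_mul_cancel (rad_dvd m)).symm⟩)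
  · obtain ⟨q, hq, hq'⟩ := (hp.prime.dvd_finset_prod_iff _).mp h
    exact h2 q hq hq'

theorem q_lt_q_prime_pow (p : ℕ) (hp : p.Prime) (hodd : Odd p) (i : ℕ) (hi : 2 ≤ i)
    (n : ℕ) (hn : 0 < n) (htot : n.totient = (p ^ i).totient)
    (hne1 : n ≠ p ^ i) (hne2 : n ≠ 2 * p ^ i) :
    n / rad n < p ^ i / rad (p ^ i) := by
  have hp1 : 1 < p := hp.one_lt
  have hp3 : 3 ≤ p := by
    rcases hodd with ⟨k, hk⟩
    omega
  have hrhs : p ^ i / rad (p ^ i) = p ^ (i - 1) := by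
    have hradpi : rad (p ^ i) = p := by
      rw [rad, Nat.primeFactors_pow p (by omega), hp.primeFactors]
      simp
    rw [hradpi]
    calc p ^ i / p = p ^ i / p ^ 1 := by rw [pow_one]
    _ = p ^ (i - 1) := Nat.pow_div (by omega) hp.pos
  rw [hrhs]
  have htot' : n.totient = p ^ (i - 1) * (p - 1) := by
    rw [htot, Nat.totient_prime_pow hp (by omega)]
  by_cases hcase : ∃ q ∈ n.primeFactors, p ∣ q - 1
  · -- Case A: a prime factor q of n satisfies p ∣ q - 1, hence q - 1 ≥ 2p > p - 1.
    obtain ⟨q, hq, hdvd⟩ := hcase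
    have hqp : q.Prime := Nat.prime_of_mem_primeFactors hq
    have hq2 : q ≠ 2 := by
      rintro rfl
      simp at hdvd
      omega
    have hqodd : ¬ 2 ∣ q := by
      intro h
      exact hq2 ((hqp.eq_one_or_self_of_dvd 2 h).resolve_left (by norm_num)).symm
    have h2dvd : 2 ∣ q - 1 := by
      rcases Nat.even_or_odd q with he | ho
      · exact absurd he.two_dvd hqodd
      · rcases ho with ⟨k, hk⟩; omega
    have h2p : 2 * p ∣ q - 1 := Nat.Coprime.mul_dvd_of_dvd_of_dvd
      (Nat.coprime_two_left.mpr hodd) h2dvd hdvd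
    have hq1 : 2 * p ≤ q - 1 := Nat.le_of_dvd (by have := hqp.two_le; omega) h2p
    set P := ∏ r ∈ n.primeFactors, (r - 1) with hP
    have hPdvd : q - 1 ∣ P := Finset.dvd_prod_of_mem _ hq
    have hPpos : 0 < P := Finset.prod_pos fun r hr => by
      have := (Nat.prime_of_mem_primeFactors hr).two_le; omega
    have hPge : p - 1 < P := by
      have := Nat.le_of_dvd hPpos hPdvd
      omega
    -- From the totient formula: (n / rad n) * P = p^(i-1) * (p-1)
    have hE : (n / rad n) * P = p ^ (i - 1) * (p - 1) := by
      rw [← totient_formula n hn.ne', htot']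
    have hx : 0 < n / rad n :=
      Nat.div_pos (Nat.le_of_dvd hn (rad_dvd n)) (rad_pos n)
    have h1 : (n / rad n) * (p - 1) < (n / rad n) * P :=
      mul_lt_mul_of_pos_left hPge hx
    rw [hE] at h1
    exact Nat.lt_of_mul_lt_mul_right h1
  · -- Case B: no prime factor q of n has p ∣ q - 1; derive n ∈ {p^i, 2p^i}.
    exfalso
    push_neg at hcase
    set a := n.factorization p with ha
    set m := n / p ^ a with hm
    have hnm : p ^ a * m = n := Nat.ordProj_mul_ordCompl_eq_self n p
    have hm0 : m ≠ 0 := by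
      intro h
      rw [h, mul_zero] at hnm
      omega
    have hmdvd : m ∣ n := ⟨p ^ a, by rw [← hnm, mul_comm]⟩
    have hcop : p.Coprime m := Nat.coprime_ordCompl hp hn.ne'
    have hpm : ¬ p ∣ m := (hp.coprime_iff_not_dvd).mp hcop
    have hptm : ¬ p ∣ m.totient := by
      refine not_dvd_totient p m hp hm0 hpm fun q hq => ?_
      exact hcase q (Nat.primeFactors_mono hmdvd hn.ne' hq)
    have htm : n.totient = (p ^ a).totient * m.totient := by
      rw [← hnm, Nat.totient_mul (hcop.pow_left a)]
    rcases Nat.eq_zero_or_pos a with haz | hapos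
    · -- a = 0 : then p ∤ n.totient, but p ∣ p^(i-1)*(p-1)
      rw [haz, pow_zero, Nat.totient_one, one_mul] at htm
      apply hptm
      rw [← htm, htot']
      exact Dvd.dvd.mul_right (dvd_pow_self p (by omega)) _
    · rw [Nat.totient_prime_pow hp hapos] at htm
      have hkey : p ^ (a - 1) * m.totient = p ^ (i - 1) := by
        have h' : (p ^ (a - 1) * m.totient) * (p - 1) = p ^ (i - 1) * (p - 1) := by
          rw [htot'] at htm
          ring_nf
          ring_nf at htm
          linarith [htm]
        exact Nat.eq_of_mul_eq_mul_right (by omega) h'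
      have hle : a - 1 ≤ i - 1 := by
        have : p ^ (a - 1) ∣ p ^ (i - 1) := ⟨m.totient, hkey.symm⟩
        exact (Nat.pow_dvd_pow_iff_le_right hp1).mp this
      have hai : a ≤ i := by omega
      have hmt : m.totient = p ^ (i - a) := by
        have hsplit : p ^ (i - 1) = p ^ (a - 1) * p ^ (i - a) := by
          rw [← pow_add]
          congr 1
          omega
        rw [hsplit] at hkey
        exact Nat.eq_of_mul_eq_mul_left (Nat.pow_pos hp.pos) hkey
      have hia : i = a := by
        by_contra h
        apply hptm
        rw [hmt]
        exact dvd_pow_self p (by omega)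
      have hm1 : m.totient = 1 := by rw [hmt, hia]; simp
      rcases Nat.totient_eq_one_iff.mp hm1 with h | h
      · exact hne1 (by rw [← hnm, hia, h]; ring)
      · exact hne2 (by rw [← hnm, hia, h]; ring)
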